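/- arXiv:2301.07658 — 2 statements merged into one kernel-verified Lean document; each statement's English description precedes it below -/
import Mathlib

section
/- For parameters β > 1 and γ ∈ ℝ, the tail sum ∑_{k ≥ n} k^{-β} log(k+1)^γ is asymptotically equivalent, as n → ∞, to n^{1-β} log(n)^γ / (β - 1). -/
/-!
With `b x = x ^ (1 - β) * log x ^ γ / (β - 1)`, the mean value theorem shows that the term
`k ^ (-β) * log (k + 1) ^ γ` is asymptotic to the difference `b k - b (k + 1)`. Since `b k → 0`,
these differences telescope to `b n` over `k ≥ n`, and asymptotic equivalence of nonnegative
summable terms passes to their tails.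
-/

open Filter Real Asymptotics Topology Set

theorem Real.hasDerivAt_rpow_mul_log_rpow (p s : ℝ) {x : ℝ} (hx : 1 < x) :
    HasDerivAt (fun x => x ^ p * log x ^ s) (x ^ (p - 1) * log x ^ s * (p + s / log x)) x := by
  have hx0 : x ≠ 0 := by positivity
  have hlog : log x ≠ 0 := (log_pos hx).ne'
  refine ((hasDerivAt_rpow_const (p := p) (Or.inl hx0)).mul
    ((hasDerivAt_log hx0).rpow_const (p := s) (Or.inl hlog))).congr_deriv ?_
  rw [rpow_sub_one hx0, rpow_sub_one hlog]
  field_simp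

theorem tendsto_rpow_mul_log_rpow_atTop_nhds_zero {p : ℝ} (hp : p < 0) (s : ℝ) :
    Tendsto (fun x : ℝ => x ^ p * log x ^ s) atTop (𝓝 0) := by
  refine ((isLittleO_log_rpow_rpow_atTop s (neg_pos.2 hp)).tendsto_div_nhds_zero).congr' ?_
  filter_upwards [eventually_gt_atTop 0] with x hx
  rw [rpow_neg hx.le, div_inv_eq_mul, mul_comm]

theorem Asymptotics.IsEquivalent.log_rpow_natCast {u : ℕ → ℝ}
    (hu : u ~[atTop] fun n => (n : ℝ)) (s : ℝ) :
    (fun n => Real.log (u n) ^ s) ~[atTop] fun n => Real.log n ^ s :=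
  (hu.log tendsto_natCast_atTop_atTop).rpow fun n => log_natCast_nonneg n

theorem isEquivalent_rpow_mul_log_rpow_succ_sub {p : ℝ} (hp : p ≠ 0) (s : ℝ) :
    (fun n : ℕ => (((n + 1 : ℝ) ^ p * log (n + 1) ^ s) - (n : ℝ) ^ p * log n ^ s) / p)
      ~[atTop] fun n => (n : ℝ) ^ (p - 1) * log n ^ s := by
  have hmvt : ∀ n : ℕ, ∃ ξ ∈ Icc (n : ℝ) (n + 1), 2 ≤ n →
      ((n + 1 : ℝ) ^ p * log (n + 1) ^ s) - (n : ℝ) ^ p * log n ^ s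
        = ξ ^ (p - 1) * log ξ ^ s * (p + s / log ξ) := by
    intro n
    by_cases hn : 2 ≤ n
    · have hn' : (2 : ℝ) ≤ n := by exact_mod_cast hn
      have hderiv : ∀ x ∈ Icc (n : ℝ) (n + 1), HasDerivAt (fun x => x ^ p * log x ^ s)
          (x ^ (p - 1) * log x ^ s * (p + s / log x)) x :=
        fun x hx => hasDerivAt_rpow_mul_log_rpow p s (by linarith [hx.1])
      obtain ⟨ξ, hξ, heq⟩ := exists_hasDerivAt_eq_slope _ _ (lt_add_one (n : ℝ))
        (fun x hx => (hderiv x hx).continuousAt.continuousWithinAt)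
        (fun x hx => hderiv x (Ioo_subset_Icc_self hx))
      exact ⟨ξ, Ioo_subset_Icc_self hξ, fun _ => by simpa using heq.symm⟩
    · exact ⟨n, ⟨le_rfl, by linarith⟩, fun h => absurd h hn⟩
  choose ξ hξ_mem hξ_eq using hmvt
  have hξ : ξ ~[atTop] fun n => (n : ℝ) := by
    refine IsBigO.trans_isLittleO (g := fun _ => (1 : ℝ)) (IsBigO.of_bound 1 ?_)
      ((isLittleO_one_left_iff ℝ).2 (tendsto_norm_atTop_atTop.comp tendsto_natCast_atTop_atTop))
    refine Eventually.of_forall fun n => ?_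
    simp only [Pi.sub_apply, norm_one, mul_one, Real.norm_eq_abs, abs_le]
    constructor <;> linarith [(hξ_mem n).1, (hξ_mem n).2]
  have hfactor : (fun n => (p + s / log (ξ n)) / p) ~[atTop] fun _ => (1 : ℝ) := by
    refine (isEquivalent_const_iff_tendsto one_ne_zero).2 ?_
    have h0 : Tendsto (fun n => s / log (ξ n)) atTop (𝓝 0) :=
      tendsto_const_nhds.div_atTop
        (tendsto_log_atTop.comp (hξ.symm.tendsto_atTop tendsto_natCast_atTop_atTop))
    simpa [hp] using (h0.const_add p).div_const p
  have hprod := ((hξ.rpow (r := p - 1) fun n => Nat.cast_nonneg n).mul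
    (hξ.log_rpow_natCast s)).mul hfactor
  refine (hprod.congr_left ?_).congr_right (Eventually.of_forall fun n => by simp)
  filter_upwards [eventually_ge_atTop 2] with n hn
  simp only [Pi.mul_apply, Pi.pow_apply, hξ_eq n hn]
  ring

theorem Antitone.hasSum_sub_succ {b : ℕ → ℝ} (hb : Antitone b)
    (h0 : Tendsto b atTop (𝓝 0)) : HasSum (fun k => b k - b (k + 1)) (b 0) := by
  rw [hasSum_iff_tendsto_nat_of_nonneg (fun k => sub_nonneg.2 (hb k.le_succ))]
  simp only [Finset.sum_range_sub']
  simpa using h0.const_sub (b 0)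

theorem Asymptotics.IsEquivalent.tsum_nat_add {a c : ℕ → ℝ} (h : a ~[atTop] c)
    (hc : ∀ᶠ k in atTop, 0 ≤ c k) (hsum : Summable c) :
    (fun n => ∑' k, a (n + k)) ~[atTop] fun n => ∑' k, c (n + k) := by
  have hsum_a : Summable a := summable_of_isBigO_nat hsum h.isBigO
  refine isLittleO_iff.2 fun ε hε => ?_
  obtain ⟨N, hN⟩ := eventually_atTop.1 ((isLittleO_iff.1 h hε).and hc)
  filter_upwards [eventually_ge_atTop N] with n hn
  have hc_nonneg : ∀ k, 0 ≤ c (n + k) := fun k => (hN (n + k) (by omega)).2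
  have hdiff : ∀ k, ‖a (n + k) - c (n + k)‖ ≤ ε * c (n + k) := fun k => by
    simpa [Real.norm_of_nonneg (hc_nonneg k)] using (hN (n + k) (by omega)).1
  have hsum_c : Summable fun k => c (n + k) := hsum.comp_injective (add_right_injective n)
  have hsum_a' : Summable fun k => a (n + k) := hsum_a.comp_injective (add_right_injective n)
  rw [Pi.sub_apply, ← hsum_a'.tsum_sub hsum_c, Real.norm_of_nonneg (tsum_nonneg hc_nonneg)]
  exact tsum_of_norm_bounded (hsum_c.hasSum.mul_left ε) hdiff

theorem Asymptotics.IsEquivalent.tsum_nat_add_of_sub_succ {a b : ℕ → ℝ}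
    (h : a ~[atTop] fun n => b n - b (n + 1)) (ha : ∀ᶠ n in atTop, 0 ≤ a n)
    (hb : Tendsto b atTop (𝓝 0)) :
    (fun n => ∑' k, a (n + k)) ~[atTop] b := by
  obtain ⟨N, hN⟩ := eventually_atTop.1 (h.symm.eventually_nonneg ha)
  have htail : ∀ n ≥ N, HasSum (fun k => b (n + k) - b (n + k + 1)) (b n) := by
    intro n hn
    have hanti : Antitone fun k => b (n + k) :=
      antitone_nat_of_succ_le fun k => sub_nonneg.1 (hN (n + k) (by omega))
    exact hanti.hasSum_sub_succ (hb.comp (tendsto_atTop_mono (Nat.le_add_left · n) tendsto_id))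
  have hsum : Summable fun n => b n - b (n + 1) := (summable_nat_add_iff N).1 <|
    (htail N le_rfl).summable.congr fun k => by rw [add_comm]
  exact (h.tsum_nat_add (eventually_atTop.2 ⟨N, hN⟩) hsum).congr_right
    (eventually_atTop.2 ⟨N, fun n hn => (htail n hn).tsum_eq⟩)

/-- Tail sum `∑_{k ≥ n} k^{-β} log(k+1)^γ` is asymptotically `n^{1-β} log(n)^γ / (β-1)`. -/
theorem tail_sum_asymptotic (β γ : ℝ) (hβ : 1 < β) :
    Tendsto (fun n : ℕ =>
      (∑' k : ℕ, ((n + k : ℕ) : ℝ) ^ (-β) * Real.log (((n + k : ℕ) : ℝ) + 1) ^ γ) /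
        ((n : ℝ) ^ (1 - β) * Real.log (n : ℝ) ^ γ / (β - 1)))
      atTop (nhds 1) := by
  set b : ℕ → ℝ := fun n => (n : ℝ) ^ (1 - β) * log n ^ γ / (β - 1) with hb
  have hterm : (fun n : ℕ => (n : ℝ) ^ (-β) * log ((n : ℝ) + 1) ^ γ)
      ~[atTop] fun n => b n - b (n + 1) := by
    have hsucc : (fun n : ℕ => (n : ℝ) + 1) ~[atTop] fun n => (n : ℝ) :=
      IsEquivalent.refl.add_const_of_norm_tendsto_atTop
        (tendsto_norm_atTop_atTop.comp tendsto_natCast_atTop_atTop)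
    have hdiff := isEquivalent_rpow_mul_log_rpow_succ_sub (p := 1 - β) (by linarith) γ
    rw [sub_sub_cancel_left] at hdiff
    refine (IsEquivalent.refl.mul (hsucc.log_rpow_natCast γ)).trans (hdiff.symm.congr_right ?_)
    refine Eventually.of_forall fun n => ?_
    simp only [hb, Nat.cast_add, Nat.cast_one]
    rw [← neg_sub β, div_neg, ← sub_div, ← neg_div, neg_sub]
  have hterm_nonneg : ∀ᶠ n : ℕ in atTop, 0 ≤ (n : ℝ) ^ (-β) * log ((n : ℝ) + 1) ^ γ :=
    Eventually.of_forall fun n =>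
      mul_nonneg (rpow_nonneg n.cast_nonneg _) (rpow_nonneg (log_nonneg (by simp)) _)
  have hb0 : Tendsto b atTop (𝓝 0) := by
    simpa using ((tendsto_rpow_mul_log_rpow_atTop_nhds_zero (by linarith) γ).comp
      tendsto_natCast_atTop_atTop).div_const (β - 1)
  have hb_ne : ∀ᶠ n in atTop, b n ≠ 0 := by
    filter_upwards [eventually_ge_atTop 2] with n hn
    have hn1 : (1 : ℝ) < n := by exact_mod_cast hn
    exact (div_pos (mul_pos (rpow_pos_of_pos (by linarith) _) (rpow_pos_of_pos (log_pos hn1) _))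
      (by linarith)).ne'
  exact (isEquivalent_iff_tendsto_one hb_ne).1 (hterm.tsum_nat_add_of_sub_succ hterm_nonneg hb0)
end

section
/- Let α > −2 and define β > 1 by −α = 2 − 1/(β−1). With u_k proportional to k^{-β}, S_n = ∑_{k≤n} u_k, R_n = ∑_{k>n} u_k, and C_n = [S_{n−1}, S_n]², suppose ρ(x,y) = Θ(dist((x,y),(1,1))^α) near (1,1) in L¹-distance. Then ∫_{C_n} ρ = Θ(n^{-3}) as n → ∞. -/
open Filter MeasureTheory Real Set

/-!
With `Z = ∑ k^{-β}` and the tail `T n = ∑_{k>n} k^{-β}` one has `1 - S n = T n / Z`, so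
`C_n` is a square of side `n^{-β} / Z` all of whose points lie at L¹-distance between
`2 T n / Z` and `2 T (n-1) / Z` from the corner `(1,1)`. Comparison with `∫ x^{-β}` gives
`T n ≍ n^{1-β}`, hence `ρ ≍ n^{(1-β)α}` on `C_n` and
`∫_{C_n} ρ ≍ n^{(1-β)α - 2β} = n^{-3}`.
-/
noncomputable def pSeriesTail (β : ℝ) (n : ℕ) : ℝ :=
  ∑' k : ℕ, ((k + (n + 1) : ℕ) : ℝ) ^ (-β)

section PSeriesTail

variable {β : ℝ}

lemma summable_pSeriesTail_terms (hβ : 1 < β) (n : ℕ) :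
    Summable fun k : ℕ => ((k + (n + 1) : ℕ) : ℝ) ^ (-β) :=
  (summable_nat_add_iff (f := fun k : ℕ => (k : ℝ) ^ (-β)) (n + 1)).mpr
    (Real.summable_nat_rpow.mpr (by linarith))

lemma pSeriesTail_nonneg (n : ℕ) : 0 ≤ pSeriesTail β n :=
  tsum_nonneg fun _ => rpow_nonneg (Nat.cast_nonneg _) _

lemma sum_Icc_add_pSeriesTail (hβ : 1 < β) (n : ℕ) :
    ∑ k ∈ Finset.Icc 1 n, (k : ℝ) ^ (-β) + pSeriesTail β n =
      ∑' k : ℕ, (k : ℝ) ^ (-β) := by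
  rw [← (Real.summable_nat_rpow.mpr (by linarith)).sum_add_tsum_nat_add (n + 1),
    Finset.range_eq_Ico, Finset.sum_eq_sum_Ico_succ_bot (Nat.succ_pos n), Nat.cast_zero,
    zero_rpow (by linarith), zero_add]
  rfl

lemma pSeriesTail_le (hβ : 1 < β) {n : ℕ} (hn : 1 ≤ n) :
    pSeriesTail β n ≤ (n : ℝ) ^ (1 - β) / (β - 1) := by
  have hn0 : (0 : ℝ) < n := by exact_mod_cast hn
  refine Real.tsum_le_of_sum_range_le (fun _ => rpow_nonneg (Nat.cast_nonneg _) _) fun m => ?_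
  have hanti : AntitoneOn (fun x : ℝ => x ^ (-β)) (Icc (n : ℝ) (n + m)) := fun x hx y _ hxy =>
    rpow_le_rpow_of_nonpos (hn0.trans_le hx.1) hxy (by linarith)
  calc ∑ i ∈ Finset.range m, ((i + (n + 1) : ℕ) : ℝ) ^ (-β)
      ≤ ∫ x in (n : ℝ)..n + m, x ^ (-β) := by
        convert hanti.sum_le_integral using 3 with i; push_cast; ring
    _ = ((n : ℝ) ^ (1 - β) - ((n : ℝ) + m) ^ (1 - β)) / (β - 1) := by
        have h0 : (0 : ℝ) ∉ uIcc (n : ℝ) (n + m) := by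
          rw [uIcc_of_le (by simp)]; exact fun h => hn0.not_ge h.1
        rw [integral_rpow (Or.inr ⟨by linarith, h0⟩), show -β + 1 = 1 - β by ring, ← neg_sub β 1, div_neg, ← neg_div, neg_sub]
    _ ≤ (n : ℝ) ^ (1 - β) / (β - 1) := by
        gcongr
        exact sub_le_self _ (rpow_nonneg (by positivity) _)

lemma le_pSeriesTail (hβ : 1 < β) (n : ℕ) :
    (2 : ℝ) ^ (-β) * (n : ℝ) ^ (1 - β) ≤ pSeriesTail β n := by
  rcases Nat.eq_zero_or_pos n with rfl | hn
  · rw [Nat.cast_zero, zero_rpow (by linarith), mul_zero]; exact pSeriesTail_nonneg 0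
  have hn0 : (0 : ℝ) < n := by exact_mod_cast hn
  calc (2 : ℝ) ^ (-β) * (n : ℝ) ^ (1 - β)
      = ∑ _i ∈ Finset.range n, ((2 * n : ℕ) : ℝ) ^ (-β) := by
        rw [Finset.sum_const, Finset.card_range, nsmul_eq_mul, Nat.cast_mul, Nat.cast_ofNat,
          mul_rpow (by norm_num) hn0.le, sub_eq_add_neg, rpow_add hn0, rpow_one]
        ring
    _ ≤ ∑ i ∈ Finset.range n, ((i + (n + 1) : ℕ) : ℝ) ^ (-β) := by
        refine Finset.sum_le_sum fun i hi => rpow_le_rpow_of_nonpos (by positivity) ?_ (by linarith)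
        exact_mod_cast (by grind : i + (n + 1) ≤ 2 * n)
    _ ≤ pSeriesTail β n :=
        (summable_pSeriesTail_terms hβ n).sum_le_tsum _ fun _ _ =>
          rpow_nonneg (Nat.cast_nonneg _) _

lemma pSeriesTail_pred_le (hβ : 1 < β) {n : ℕ} (hn : 2 ≤ n) :
    pSeriesTail β (n - 1) ≤ 2 ^ (β - 1) / (β - 1) * (n : ℝ) ^ (1 - β) := by
  have hn0 : (0 : ℝ) < n := by positivity
  have hn2 : (2 : ℝ) ≤ n := by exact_mod_cast hn
  have hhalf : (n : ℝ) / 2 ≤ ((n - 1 : ℕ) : ℝ) := by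
    rw [Nat.cast_sub (by omega), Nat.cast_one]
    linarith
  calc pSeriesTail β (n - 1) ≤ ((n - 1 : ℕ) : ℝ) ^ (1 - β) / (β - 1) :=
        pSeriesTail_le hβ (by omega)
    _ ≤ ((n : ℝ) / 2) ^ (1 - β) / (β - 1) :=
        div_le_div_of_nonneg_right (rpow_le_rpow_of_nonpos (by positivity) hhalf (by linarith))
          (by linarith)
    _ = 2 ^ (β - 1) / (β - 1) * (n : ℝ) ^ (1 - β) := by
        rw [div_rpow hn0.le zero_le_two, show β - 1 = -(1 - β) by ring, rpow_neg zero_le_two]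
        field_simp

lemma tsum_nat_rpow_neg_pos (hβ : 1 < β) : 0 < ∑' k : ℕ, (k : ℝ) ^ (-β) := by
  rw [← sum_Icc_add_pSeriesTail hβ 1, Finset.Icc_self, Finset.sum_singleton, Nat.cast_one,
    one_rpow]
  exact add_pos_of_pos_of_nonneg one_pos (pSeriesTail_nonneg 1)

end PSeriesTail

noncomputable def normalizedPartialSum (β : ℝ) (n : ℕ) : ℝ :=
  ∑ k ∈ Finset.Icc 1 n, (k : ℝ) ^ (-β) / ∑' k : ℕ, (k : ℝ) ^ (-β)

section NormalizedPartialSum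

variable {β : ℝ}

lemma one_sub_normalizedPartialSum (hβ : 1 < β) (n : ℕ) :
    1 - normalizedPartialSum β n = pSeriesTail β n / ∑' k : ℕ, (k : ℝ) ^ (-β) := by
  have hZ := (tsum_nat_rpow_neg_pos hβ).ne'
  rw [normalizedPartialSum, ← Finset.sum_div, ← sum_Icc_add_pSeriesTail hβ n] at *
  field_simp
  ring

lemma normalizedPartialSum_le_one (hβ : 1 < β) (n : ℕ) : normalizedPartialSum β n ≤ 1 :=
  sub_nonneg.mp <| one_sub_normalizedPartialSum hβ n ▸
    div_nonneg (pSeriesTail_nonneg n) (tsum_nat_rpow_neg_pos hβ).le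

lemma normalizedPartialSum_sub_pred {n : ℕ} (hn : 1 ≤ n) :
    normalizedPartialSum β n - normalizedPartialSum β (n - 1) =
      (n : ℝ) ^ (-β) / ∑' k : ℕ, (k : ℝ) ^ (-β) := by
  obtain ⟨m, rfl⟩ := Nat.exists_eq_add_of_le' hn
  rw [normalizedPartialSum, normalizedPartialSum, Finset.sum_Icc_succ_top (by omega),
    Nat.add_sub_cancel, add_sub_cancel_left]

lemma normalizedPartialSum_mono : Monotone (normalizedPartialSum β) := fun _ _ h =>
  Finset.sum_le_sum_of_subset_of_nonneg (Finset.Icc_subset_Icc_right h) fun _ _ _ =>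
    div_nonneg (rpow_nonneg (Nat.cast_nonneg _) _)
      (tsum_nonneg fun _ => rpow_nonneg (Nat.cast_nonneg _) _)

lemma normalizedPartialSum_nonneg (n : ℕ) : 0 ≤ normalizedPartialSum β n := by
  simpa [normalizedPartialSum] using normalizedPartialSum_mono (β := β) (Nat.zero_le n)

end NormalizedPartialSum

lemma corner_dist_bounds {a b : ℝ} (ha : 0 ≤ a) (hb : b ≤ 1) {p : ℝ × ℝ}
    (hp : p ∈ Icc (a, a) (b, b)) :
    p ∈ Icc (0, 0) (1, 1) ∧ 2 * (1 - b) ≤ |p.1 - 1| + |p.2 - 1| ∧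
      |p.1 - 1| + |p.2 - 1| ≤ 2 * (1 - a) := by
  obtain ⟨⟨hx, hy⟩, hx', hy'⟩ := hp
  refine ⟨⟨⟨ha.trans hx, ha.trans hy⟩, hx'.trans hb, hy'.trans hb⟩, ?_⟩
  rw [abs_of_nonpos (by linarith), abs_of_nonpos (by linarith)]
  constructor <;> linarith

lemma corner_dist_comparable {β : ℝ} (hβ : 1 < β) :
    ∃ A B : ℝ, 0 < A ∧ 0 < B ∧ ∀ n : ℕ, 2 ≤ n →
      ∀ p ∈ Icc (normalizedPartialSum β (n - 1), normalizedPartialSum β (n - 1))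
        (normalizedPartialSum β n, normalizedPartialSum β n),
      p ∈ Icc (0, 0) (1, 1) ∧ A * (n : ℝ) ^ (1 - β) ≤ |p.1 - 1| + |p.2 - 1| ∧
        |p.1 - 1| + |p.2 - 1| ≤ B * (n : ℝ) ^ (1 - β) := by
  set Z := ∑' k : ℕ, (k : ℝ) ^ (-β)
  have hZ : 0 < Z := tsum_nat_rpow_neg_pos hβ
  have hβ1 : 0 < β - 1 := by linarith
  refine ⟨2 * 2 ^ (-β) / Z, 2 * (2 ^ (β - 1) / (β - 1)) / Z, by positivity, by positivity,
    fun n hn p hp => ?_⟩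
  obtain ⟨hp01, hlo, hhi⟩ :=
    corner_dist_bounds (normalizedPartialSum_nonneg _) (normalizedPartialSum_le_one hβ _) hp
  rw [one_sub_normalizedPartialSum hβ] at hlo hhi
  refine ⟨hp01, le_trans ?_ hlo, hhi.trans ?_⟩
  · rw [mul_div_assoc', div_mul_eq_mul_div, mul_assoc]
    gcongr
    exact le_pSeriesTail hβ n
  · rw [mul_div_assoc', div_mul_eq_mul_div, mul_assoc]
    gcongr
    exact pSeriesTail_pred_le hβ hn

lemma rpow_bounds_of_mul_bounds (α : ℝ) {A B t w : ℝ} (hA : 0 < A) (ht : 0 < t)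
    (hAw : A * t ≤ w) (hwB : w ≤ B * t) :
    min (A ^ α) (B ^ α) * t ^ α ≤ w ^ α ∧ w ^ α ≤ max (A ^ α) (B ^ α) * t ^ α := by
  have hs : w = w / t * t := (div_mul_cancel₀ w ht.ne').symm
  have hA' : A ≤ w / t := (le_div_iff₀ ht).mpr hAw
  have hB' : w / t ≤ B := (div_le_iff₀ ht).mpr hwB
  have hs0 : 0 < w / t := hA.trans_le hA'
  rw [hs, mul_rpow hs0.le ht.le]
  rcases le_total 0 α with hα | hα
  · exact ⟨by gcongr; exact (min_le_left _ _).trans (rpow_le_rpow hA.le hA' hα),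
      by gcongr; exact (rpow_le_rpow hs0.le hB' hα).trans (le_max_right _ _)⟩
  · exact ⟨by gcongr; exact (min_le_right _ _).trans (rpow_le_rpow_of_nonpos hs0 hB' hα),
      by gcongr; exact (rpow_le_rpow_of_nonpos hA hA' hα).trans (le_max_left _ _)⟩

lemma eventually_density_bounds_on_box (α : ℝ) {β : ℝ} (hβ : 1 < β) {ρ : ℝ × ℝ → ℝ}
    {c₁ c₂ δ : ℝ} (hc₁ : 0 < c₁) (hc₂ : 0 < c₂) (hδ : 0 < δ)
    (hρ : ∀ p ∈ Icc ((0 : ℝ), (0 : ℝ)) (1, 1), |p.1 - 1| + |p.2 - 1| < δ →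
      c₁ * (|p.1 - 1| + |p.2 - 1|) ^ α ≤ ρ p ∧ ρ p ≤ c₂ * (|p.1 - 1| + |p.2 - 1|) ^ α) :
    ∃ m M : ℝ, 0 < m ∧ 0 < M ∧ ∀ᶠ n : ℕ in atTop,
      ∀ p ∈ Icc (normalizedPartialSum β (n - 1), normalizedPartialSum β (n - 1))
        (normalizedPartialSum β n, normalizedPartialSum β n),
      m * ((n : ℝ) ^ (1 - β)) ^ α ≤ ρ p ∧ ρ p ≤ M * ((n : ℝ) ^ (1 - β)) ^ α := by
  obtain ⟨A, B, hA, hB, hdist⟩ := corner_dist_comparable hβ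
  have hsmall : ∀ᶠ n : ℕ in atTop, B * (n : ℝ) ^ (1 - β) < δ := by
    have h := (tendsto_rpow_neg_atTop (by linarith : 0 < β - 1)).comp tendsto_natCast_atTop_atTop
    simpa [neg_sub] using (h.const_mul B).eventually_lt_const (by simpa using hδ)
  refine ⟨c₁ * min (A ^ α) (B ^ α), c₂ * max (A ^ α) (B ^ α), by positivity,
    mul_pos hc₂ ((rpow_pos_of_pos hA α).trans_le (le_max_left _ _)), ?_⟩
  filter_upwards [eventually_ge_atTop 2, hsmall] with n hn hnδ p hp
  obtain ⟨hp01, hlo, hhi⟩ := hdist n hn p hp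
  obtain ⟨hρlo, hρhi⟩ := hρ p hp01 (hhi.trans_lt hnδ)
  obtain ⟨hwlo, hwhi⟩ := rpow_bounds_of_mul_bounds α hA (by positivity) hlo hhi
  rw [mul_assoc, mul_assoc]
  exact ⟨(mul_le_mul_of_nonneg_left hwlo hc₁.le).trans hρlo,
    hρhi.trans (mul_le_mul_of_nonneg_left hwhi hc₂.le)⟩

lemma rpow_density_mul_area_eq_rpow_neg_three {α β t : ℝ} (ht : 0 ≤ t) (hβ : 1 < β)
    (hdef : -α = 2 - 1 / (β - 1)) :
    (t ^ (1 - β)) ^ α * (t ^ (-β) * t ^ (-β)) = t ^ (-3 : ℝ) := by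
  have hexp : (1 - β) * α + (-β + -β) = -3 := by
    have : β - 1 ≠ 0 := by linarith
    field_simp at hdef
    linear_combination hdef
  rw [← rpow_mul ht, ← rpow_add' ht (by linarith : -β + -β < 0).ne,
    ← rpow_add' ht (by rw [hexp]; norm_num), hexp]

lemma integral_box_bounds {f : ℝ × ℝ → ℝ} (hf : Measurable f) {a b c d m M : ℝ}
    (hab : a ≤ b) (hcd : c ≤ d) (hbd : ∀ p ∈ Icc (a, c) (b, d), m ≤ f p ∧ f p ≤ M) :
    m * ((b - a) * (d - c)) ≤ ∫ x in a..b, ∫ y in c..d, f (x, y) ∧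
      ∫ x in a..b, ∫ y in c..d, f (x, y) ≤ M * ((b - a) * (d - c)) := by
  set s := Ioc a b ×ˢ Ioc c d
  have hbd' : ∀ p ∈ s, m ≤ f p ∧ f p ≤ M := fun p hp =>
    hbd p ⟨⟨hp.1.1.le, hp.2.1.le⟩, hp.1.2, hp.2.2⟩
  have hs : volume s ≠ ⊤ := by
    rw [Measure.volume_eq_prod, Measure.prod_prod]; simp [ENNReal.mul_eq_top]
  have hvol : volume.real s = (b - a) * (d - c) := by
    rw [Measure.volume_eq_prod, measureReal_prod_prod, volume_real_Ioc_of_le hab,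
      volume_real_Ioc_of_le hcd]
  have hint : IntegrableOn f s :=
    Measure.integrableOn_of_bounded hs hf.aestronglyMeasurable
      (ae_restrict_of_forall_mem (measurableSet_Ioc.prod measurableSet_Ioc) fun p hp =>
        abs_le_max_abs_abs (hbd' p hp).1 (hbd' p hp).2)
  have hiter : ∫ x in a..b, ∫ y in c..d, f (x, y) = ∫ p in s, f p := by
    simp_rw [intervalIntegral.integral_of_le hab, intervalIntegral.integral_of_le hcd]
    rw [Measure.volume_eq_prod, setIntegral_prod f (Measure.volume_eq_prod ℝ ℝ ▸ hint)]
  rw [hiter, ← hvol]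
  refine ⟨setIntegral_ge_of_const_le_real (measurableSet_Ioc.prod measurableSet_Ioc) hs
    (fun p hp => (hbd' p hp).1) hint, ?_⟩
  rw [mul_comm, ← smul_eq_mul, ← setIntegral_const]
  exact setIntegral_mono_on hint (integrableOn_const hs) (measurableSet_Ioc.prod measurableSet_Ioc)
    fun p hp => (hbd' p hp).2

theorem corner_box_mass_theta_general (α β : ℝ) (hβ : 1 < β)
    (hdef : -α = 2 - 1 / (β - 1))
    (Z : ℝ) (hZ : Z = ∑' k : ℕ, (k : ℝ) ^ (-β))
    (u : ℕ → ℝ) (hu : ∀ k, u k = (k : ℝ) ^ (-β) / Z)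
    (S : ℕ → ℝ) (hS : ∀ n, S n = ∑ k ∈ Finset.Icc 1 n, u k)
    (ρ : ℝ × ℝ → ℝ) (hρm : Measurable ρ)
    (hρ : ∃ c₁ c₂ δ : ℝ, 0 < c₁ ∧ 0 < c₂ ∧ 0 < δ ∧
      ∀ p ∈ Set.Icc ((0 : ℝ), (0 : ℝ)) (1, 1),
        |p.1 - 1| + |p.2 - 1| < δ →
        c₁ * (|p.1 - 1| + |p.2 - 1|) ^ α ≤ ρ p ∧
        ρ p ≤ c₂ * (|p.1 - 1| + |p.2 - 1|) ^ α) :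
    ∃ c C : ℝ, 0 < c ∧ 0 < C ∧ ∀ᶠ n : ℕ in atTop,
      c * (n : ℝ) ^ (-3 : ℝ) ≤ ∫ x in S (n - 1)..S n, ∫ y in S (n - 1)..S n, ρ (x, y) ∧
      ∫ x in S (n - 1)..S n, ∫ y in S (n - 1)..S n, ρ (x, y) ≤ C * (n : ℝ) ^ (-3 : ℝ) := by
  obtain rfl : S = normalizedPartialSum β := funext fun n => by
    simp only [hS, hu, hZ, normalizedPartialSum]
  obtain ⟨c₁, c₂, δ, hc₁, hc₂, hδ, hρ⟩ := hρ
  obtain ⟨m, M, hm, hM, hbounds⟩ := eventually_density_bounds_on_box α hβ hc₁ hc₂ hδ hρ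
  have hZ0 : 0 < Z := hZ ▸ tsum_nat_rpow_neg_pos hβ
  refine ⟨m / Z ^ 2, M / Z ^ 2, by positivity, by positivity, ?_⟩
  filter_upwards [eventually_ge_atTop 1, hbounds] with n hn hpt
  have hmass : ∀ K : ℝ,
      K * ((n : ℝ) ^ (1 - β)) ^ α * ((n : ℝ) ^ (-β) / Z * ((n : ℝ) ^ (-β) / Z)) =
        K / Z ^ 2 * (n : ℝ) ^ (-3 : ℝ) := fun K => by
    rw [← rpow_density_mul_area_eq_rpow_neg_three (Nat.cast_nonneg n) hβ hdef]
    field_simp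
  have hbox := integral_box_bounds hρm (normalizedPartialSum_mono (Nat.sub_le n 1))
    (normalizedPartialSum_mono (Nat.sub_le n 1)) hpt
  rwa [normalizedPartialSum_sub_pred hn, ← hZ, hmass, hmass] at hbox

/-- For `α > −2`, `β` defined by `−α = 2 − 1/(β−1)`, and `ρ` diverging as
`dist((x,y),(1,1))^α` near the corner `(1,1)` (L¹-distance), the mass attributed
by `ρ` to the diagonal box `C_n = [S_{n−1}, S_n]²` is `Θ(n^{-3})`. -/
theorem corner_box_mass_theta (α β : ℝ) (hα : -2 < α) (hβ : 1 < β)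
    (hdef : -α = 2 - 1 / (β - 1))
    (Z : ℝ) (hZ : Z = ∑' k : ℕ, (k : ℝ) ^ (-β))
    (u : ℕ → ℝ) (hu : ∀ k, u k = (k : ℝ) ^ (-β) / Z)
    (S : ℕ → ℝ) (hS : ∀ n, S n = ∑ k ∈ Finset.Icc 1 n, u k)
    (ρ : ℝ × ℝ → ℝ) (hρm : Measurable ρ)
    (hρ : ∃ c₁ c₂ δ : ℝ, 0 < c₁ ∧ 0 < c₂ ∧ 0 < δ ∧
      ∀ p ∈ Set.Icc ((0 : ℝ), (0 : ℝ)) (1, 1),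
        |p.1 - 1| + |p.2 - 1| < δ →
        c₁ * (|p.1 - 1| + |p.2 - 1|) ^ α ≤ ρ p ∧
        ρ p ≤ c₂ * (|p.1 - 1| + |p.2 - 1|) ^ α) :
    ∃ c C : ℝ, 0 < c ∧ 0 < C ∧ ∀ᶠ n : ℕ in atTop,
      c * (n : ℝ) ^ (-3 : ℝ) ≤ ∫ x in S (n - 1)..S n, ∫ y in S (n - 1)..S n, ρ (x, y) ∧
      ∫ x in S (n - 1)..S n, ∫ y in S (n - 1)..S n, ρ (x, y) ≤ C * (n : ℝ) ^ (-3 : ℝ) :=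
  corner_box_mass_theta_general α β hβ hdef Z hZ u hu S hS ρ hρm hρ
end
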